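/- arXiv:2603.09750 — 3 statements merged into one kernel-verified Lean document; each statement's English description precedes it below -/
import Mathlib

section
/- The constraint graph C_G of a path pair graph is bipartite; equivalently, every cycle in C_G has even length. -/
open Finset

variable {m : ℕ}

/-- First endpoint of the `e`-th edge of the Hamiltonian path induced by `π`. -/
def pFst (π : Equiv.Perm (Fin (m+1))) (e : Fin m) : Fin (m+1) := π e.castSucc

/-- Second endpoint of the `e`-th edge of the Hamiltonian path induced by `π`. -/
def pSnd (π : Equiv.Perm (Fin (m+1))) (e : Fin m) : Fin (m+1) := π e.succ

/-- Position of vertex `v` along the Hamiltonian path induced by `π`. -/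
def pos (π : Equiv.Perm (Fin (m+1))) (v : Fin (m+1)) : ℕ := (π.symm v : ℕ)

/-- Edges `e` and `f = e+1` of `P_x` form a switch pair: both `P_x`-neighbours of the
middle internal vertex `πx e.succ` lie on the same side of it in `π_y`. -/
def SwitchPairX (πx πy : Equiv.Perm (Fin (m+1))) (e f : Fin m) : Prop :=
  (e : ℕ) + 1 = (f : ℕ) ∧
    ((pos πy (pFst πx e) < pos πy (pSnd πx e) ∧ pos πy (pSnd πx f) < pos πy (pSnd πx e)) ∨
     (pos πy (pSnd πx e) < pos πy (pFst πx e) ∧ pos πy (pSnd πx e) < pos πy (pSnd πx f)))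

/-- Switch pairs of `P_y`: the same with the roles of the permutations swapped. -/
def SwitchPairY (πx πy : Equiv.Perm (Fin (m+1))) (e f : Fin m) : Prop :=
  SwitchPairX πy πx e f

/-- The `P_x`-edge `e` and the `P_y`-edge `f` have the same (unordered) pair of endpoints. -/
def SharedEdge (πx πy : Equiv.Perm (Fin (m+1))) (e f : Fin m) : Prop :=
  (pFst πx e = pFst πy f ∧ pSnd πx e = pSnd πy f) ∨
  (pFst πx e = pSnd πy f ∧ pSnd πx e = pFst πy f)

/-- Alignment of the `P_x`-edge `e`: positive (`True`) iff its endpoints appear in the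
same relative order in `π_x` and `π_y`. -/
def AlignX (πx πy : Equiv.Perm (Fin (m+1))) (e : Fin m) : Prop :=
  pos πy (pFst πx e) < pos πy (pSnd πx e)

/-- Alignment of the `P_y`-edge `e`. -/
def AlignY (πx πy : Equiv.Perm (Fin (m+1))) (e : Fin m) : Prop :=
  pos πx (pFst πy e) < pos πx (pSnd πy e)

/-- The constraint graph `C_G` on the disjoint union `V_X ⊕ V_Y` of the edges of the
two paths: switch pairs inside each part, and a matching edge for each shared edge. -/
def CG (πx πy : Equiv.Perm (Fin (m+1))) : SimpleGraph (Fin m ⊕ Fin m) where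
  Adj a b :=
    match a, b with
    | .inl e, .inl f => SwitchPairX πx πy e f ∨ SwitchPairX πx πy f e
    | .inr e, .inr f => SwitchPairY πx πy e f ∨ SwitchPairY πx πy f e
    | .inl e, .inr f => SharedEdge πx πy e f
    | .inr f, .inl e => SharedEdge πx πy e f
  symm := ⟨by rintro (e|e) (f|f) h <;> simp only at h ⊢ <;> tauto⟩
  loopless := ⟨by
    rintro (e|e) (⟨h, -⟩ | ⟨h, -⟩) <;> omega⟩


theorem pos_pFst (π : Equiv.Perm (Fin (m+1))) (e : Fin m) : pos π (pFst π e) = e := by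
  simp [pos, pFst]

theorem pos_pSnd (π : Equiv.Perm (Fin (m+1))) (e : Fin m) : pos π (pSnd π e) = e + 1 := by
  simp [pos, pSnd]

theorem pFst_eq_pSnd_of_succ (π : Equiv.Perm (Fin (m+1))) {e f : Fin m} (h : (e : ℕ) + 1 = f) :
    pFst π f = pSnd π e :=
  congrArg π (Fin.ext h.symm)

section Alignment

variable {πx πy : Equiv.Perm (Fin (m+1))} {e f : Fin m}

theorem SwitchPairX.alignX_iff_not (h : SwitchPairX πx πy e f) :
    AlignX πx πy e ↔ ¬ AlignX πx πy f := by
  obtain ⟨hsucc, hside⟩ := h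
  unfold AlignX
  rw [pFst_eq_pSnd_of_succ πx hsucc]
  omega

theorem SwitchPairY.alignY_iff_not (h : SwitchPairY πx πy e f) :
    AlignY πx πy e ↔ ¬ AlignY πx πy f :=
  SwitchPairX.alignX_iff_not h

theorem SharedEdge.alignX_iff_alignY (h : SharedEdge πx πy e f) :
    AlignX πx πy e ↔ AlignY πx πy f := by
  unfold AlignX AlignY
  rcases h with ⟨hfst, hsnd⟩ | ⟨hfst, hsnd⟩ <;>
    rw [hfst, hsnd, pos_pFst, pos_pSnd, ← hfst, ← hsnd, pos_pFst, pos_pSnd] <;> omega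

end Alignment

/-- Switch pairs flip the alignment and shared edges keep it, so colouring `P_x`-edges by their
alignment and `P_y`-edges by the opposite of theirs is proper. -/
def alignSide (πx πy : Equiv.Perm (Fin (m+1))) : Fin m ⊕ Fin m → Prop
  | .inl e => AlignX πx πy e
  | .inr f => ¬ AlignY πx πy f

theorem alignSide_adj {πx πy : Equiv.Perm (Fin (m+1))} {a b : Fin m ⊕ Fin m}
    (h : (CG πx πy).Adj a b) : ¬ (alignSide πx πy a ↔ alignSide πx πy b) := by
  rcases a with e | e <;> rcases b with f | f <;> simp only [alignSide]
  · rcases h with h | h <;> have := h.alignX_iff_not <;> tauto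
  · have := SharedEdge.alignX_iff_alignY h
    tauto
  · have := SharedEdge.alignX_iff_alignY h
    tauto
  · rcases h with h | h <;> have := h.alignY_iff_not <;> tauto

theorem CG_colorable_two (πx πy : Equiv.Perm (Fin (m+1))) : (CG πx πy).Colorable 2 := by
  simpa using (SimpleGraph.Coloring.mk (alignSide πx πy)
    fun h heq => alignSide_adj h (Iff.of_eq heq)).colorable

/-- the constraint graph `C_G` of a path pair graph is bipartite
(2-colorable); equivalently, every cycle in `C_G` has even length. -/
theorem constraintGraph_bipartite {m : ℕ} (πx πy : Equiv.Perm (Fin (m+1))) :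
    (CG πx πy).Colorable 2 ∧
      ∀ (v : Fin m ⊕ Fin m) (c : (CG πx πy).Walk v v), c.IsCycle → Even c.length :=
  ⟨CG_colorable_two πx πy, fun v c _ =>
    SimpleGraph.two_colorable_iff_forall_loop_even.mp (CG_colorable_two πx πy) v c⟩
end

section
/- Given nonnegative integer extents d_x(e) for edges e of P_x and d_y(f) for edges f of P_y satisfying the three extent constraints, define coordinates by x(π_x(1)) = 0, x(π_x(i+1)) = x(π_x(i)) + d_x on the i-th edge of P_x, and analogously y from d_y along P_y. Then the resulting point assignment is injective: no two distinct vertices receive the same grid point. -/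
open Finset

variable {m : ℕ}

/-- Feasibility of nonnegative integer extents `dx` (on `P_x`-edges) and `dy`
(on `P_y`-edges): the three extent constraints. -/
def Feasible (πx πy : Equiv.Perm (Fin (m+1))) (dx dy : Fin m → ℕ) : Prop :=
  (∀ e f : Fin m, SwitchPairX πx πy e f → 1 ≤ dx e + dx f) ∧
  (∀ e f : Fin m, SwitchPairY πx πy e f → 1 ≤ dy e + dy f) ∧
  (∀ e f : Fin m, SharedEdge πx πy e f → 1 ≤ dx e + dy f)

/-- The coordinate of vertex `v` obtained by prefix-summing the extents `d`
along the path induced by `π`, starting from `0`. -/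
def coord (π : Equiv.Perm (Fin (m+1))) (d : Fin m → ℕ) (v : Fin (m+1)) : ℕ :=
  ∑ i ∈ Finset.univ.filter (fun i : Fin m => (i : ℕ) < pos π v), d i

/- ------------------ auxiliary lemmas ------------------ -/

lemma pos_le (π : Equiv.Perm (Fin (m+1))) (v : Fin (m+1)) : pos π v ≤ m :=
  Nat.lt_succ_iff.mp (π.symm v).isLt

lemma pos_inj {π : Equiv.Perm (Fin (m+1))} {u v : Fin (m+1)} (h : pos π u = pos π v) :
    u = v := by
  have h2 : π.symm u = π.symm v := Fin.ext h
  simpa using congrArg π h2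

lemma apply_pos {π : Equiv.Perm (Fin (m+1))} {u : Fin (m+1)} {a : ℕ}
    (h : pos π u = a) (ha : a < m + 1) : π ⟨a, ha⟩ = u := by
  have h2 : π.symm u = ⟨a, ha⟩ := Fin.ext h
  rw [← h2]; simp

/-- `pos` in `πy` of the vertex at position `i` in `πx` (clamped). -/
def posq (πx πy : Equiv.Perm (Fin (m+1))) (i : ℕ) : ℕ :=
  pos πy (πx ⟨min i m, Nat.lt_succ_of_le (min_le_right _ _)⟩)

lemma posq_eq (πx πy : Equiv.Perm (Fin (m+1))) {i : ℕ} (hi : i < m + 1) :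
    posq πx πy i = pos πy (πx ⟨i, hi⟩) := by
  unfold posq
  congr 2
  exact Fin.ext (by simp [Nat.min_eq_left (Nat.lt_succ_iff.mp hi)])

lemma posq_inj {πx πy : Equiv.Perm (Fin (m+1))} {i j : ℕ} (hi : i ≤ m) (hj : j ≤ m)
    (h : posq πx πy i = posq πx πy j) : i = j := by
  unfold posq at h
  have h2 := πx.injective (pos_inj h)
  have h3 : min i m = min j m := congrArg Fin.val h2
  omega

lemma pFst_eq (π : Equiv.Perm (Fin (m+1))) (e : Fin m) :
    pFst π e = π ⟨(e : ℕ), by omega⟩ := by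
  unfold pFst; exact congrArg π (Fin.ext (by simp))

lemma pSnd_eq (π : Equiv.Perm (Fin (m+1))) (e : Fin m) :
    pSnd π e = π ⟨(e : ℕ) + 1, by omega⟩ := by
  unfold pSnd; exact congrArg π (Fin.ext (by simp))

lemma mono_inc (q : ℕ → ℕ) (a b : ℕ)
    (hinj : ∀ i, a ≤ i → i < b → q i ≠ q (i+1))
    (hns : ∀ i, a < i → i < b →
      ¬((q (i-1) < q i ∧ q (i+1) < q i) ∨ (q i < q (i-1) ∧ q i < q (i+1))))
    (h0 : q a < q (a+1)) :
    ∀ i, a ≤ i → i < b → q i < q (i+1) := by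
  intro i hai
  induction i, hai using Nat.le_induction with
  | base => intro _; exact h0
  | succ n hn ih =>
    intro hb
    have h1 : q n < q (n+1) := ih (by omega)
    have h2 := hns (n+1) (by omega) (by omega)
    have h3 := hinj (n+1) (by omega) (by omega)
    simp only [Nat.add_sub_cancel] at h2
    omega

lemma mono_dec (q : ℕ → ℕ) (a b : ℕ)
    (hinj : ∀ i, a ≤ i → i < b → q i ≠ q (i+1))
    (hns : ∀ i, a < i → i < b →
      ¬((q (i-1) < q i ∧ q (i+1) < q i) ∨ (q i < q (i-1) ∧ q i < q (i+1))))
    (h0 : q (a+1) < q a) :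
    ∀ i, a ≤ i → i < b → q (i+1) < q i := by
  intro i hai
  induction i, hai using Nat.le_induction with
  | base => intro _; exact h0
  | succ n hn ih =>
    intro hb
    have h1 : q (n+1) < q n := ih (by omega)
    have h2 := hns (n+1) (by omega) (by omega)
    have h3 := hinj (n+1) (by omega) (by omega)
    simp only [Nat.add_sub_cancel] at h2
    omega

lemma steps_inc (q : ℕ → ℕ) (a b : ℕ)
    (h : ∀ i, a ≤ i → i < b → q i < q (i+1)) :
    ∀ i j, a ≤ i → i ≤ j → j ≤ b → q i + (j - i) ≤ q j := by
  intro i j hai hij hjb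
  induction j, hij using Nat.le_induction with
  | base => omega
  | succ n hn ih =>
    have h1 := h n (by omega) (by omega)
    have h2 := ih (by omega)
    omega

lemma steps_dec (q : ℕ → ℕ) (a b : ℕ)
    (h : ∀ i, a ≤ i → i < b → q (i+1) < q i) :
    ∀ i j, a ≤ i → i ≤ j → j ≤ b → q j + (j - i) ≤ q i := by
  intro i j hai hij hjb
  induction j, hij using Nat.le_induction with
  | base => omega
  | succ n hn ih =>
    have h1 := h n (by omega) (by omega)
    have h2 := ih (by omega)
    omega

lemma path_mono (πx πy : Equiv.Perm (Fin (m+1))) (dx : Fin m → ℕ)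
    (hsw : ∀ e f : Fin m, SwitchPairX πx πy e f → 1 ≤ dx e + dx f)
    (a b : ℕ) (hab : a < b) (hb : b ≤ m)
    (hdx : ∀ e : Fin m, a ≤ (e : ℕ) → (e : ℕ) < b → dx e = 0) :
    (∀ i, a ≤ i → i < b → posq πx πy i < posq πx πy (i+1)) ∨
    (∀ i, a ≤ i → i < b → posq πx πy (i+1) < posq πx πy i) := by
  set q := posq πx πy with hq
  have hinj : ∀ i, a ≤ i → i < b → q i ≠ q (i+1) := by
    intro i _ hib hEq
    have := posq_inj (πx := πx) (πy := πy) (by omega) (by omega) hEq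
    omega
  have hns : ∀ i, a < i → i < b →
      ¬((q (i-1) < q i ∧ q (i+1) < q i) ∨ (q i < q (i-1) ∧ q i < q (i+1))) := by
    intro i hai hib hcon
    have h1m : i - 1 < m := by omega
    have h2m : i < m := by omega
    have q1 : pos πy (pFst πx ⟨i-1, h1m⟩) = q (i-1) := by
      rw [pFst_eq, hq, posq_eq _ _ (show i - 1 < m + 1 by omega)]
    have q2 : pos πy (pSnd πx ⟨i-1, h1m⟩) = q i := by
      rw [pSnd_eq, hq, posq_eq _ _ (show i < m + 1 by omega)]
      exact congrArg (fun z => pos πy (πx z)) (Fin.ext (by simp; omega))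
    have q3 : pos πy (pSnd πx ⟨i, h2m⟩) = q (i+1) := by
      rw [pSnd_eq, hq, posq_eq _ _ (show i + 1 < m + 1 by omega)]
    have hsp : SwitchPairX πx πy ⟨i-1, h1m⟩ ⟨i, h2m⟩ := by
      constructor
      · show i - 1 + 1 = i; omega
      · rw [q1, q2, q3]; exact hcon
    have h0 := hsw _ _ hsp
    have z1 := hdx ⟨i-1, h1m⟩ (show a ≤ i - 1 by omega) (show i - 1 < b by omega)
    have z2 := hdx ⟨i, h2m⟩ (show a ≤ i by omega) (show i < b by omega)
    omega
  rcases Nat.lt_or_ge (q a) (q (a+1)) with h0 | h0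
  · exact Or.inl (mono_inc q a b hinj hns h0)
  · have hne := hinj a le_rfl hab
    exact Or.inr (mono_dec q a b hinj hns (by omega))

lemma coord_zero {π : Equiv.Perm (Fin (m+1))} {d : Fin m → ℕ} {u v : Fin (m+1)}
    (hle : pos π u ≤ pos π v) (h : coord π d u = coord π d v)
    (e : Fin m) (h1 : pos π u ≤ (e : ℕ)) (h2 : (e : ℕ) < pos π v) : d e = 0 := by
  classical
  unfold coord at h
  set A := Finset.univ.filter (fun i : Fin m => (i : ℕ) < pos π u) with hA
  set B := Finset.univ.filter (fun i : Fin m => (i : ℕ) < pos π v) with hB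
  have hAB : A ⊆ B := by
    intro i hi
    simp only [hA, hB, Finset.mem_filter, Finset.mem_univ, true_and] at *
    omega
  have hsd : ∑ i ∈ B \ A, d i + ∑ i ∈ A, d i = ∑ i ∈ B, d i := Finset.sum_sdiff hAB
  have hz : ∑ i ∈ B \ A, d i = 0 := by omega
  have he : e ∈ B \ A := by
    simp only [hA, hB, Finset.mem_sdiff, Finset.mem_filter, Finset.mem_univ, true_and]
    omega
  exact (Finset.sum_eq_zero_iff.mp hz) e he

lemma main_aux (πx πy : Equiv.Perm (Fin (m+1))) (dx dy : Fin m → ℕ)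
    (hfeas : Feasible πx πy dx dy) (u v : Fin (m+1))
    (hx : coord πx dx u = coord πx dx v) (hy : coord πy dy u = coord πy dy v)
    (hlt : pos πx u < pos πx v) : False := by
  obtain ⟨hswx, hswy, hsh⟩ := hfeas
  obtain ⟨a, ha⟩ : ∃ a, pos πx u = a := ⟨_, rfl⟩
  obtain ⟨b, hb⟩ : ∃ b, pos πx v = b := ⟨_, rfl⟩
  obtain ⟨pu, hpu⟩ : ∃ c, pos πy u = c := ⟨_, rfl⟩
  obtain ⟨pv, hpv⟩ : ∃ c, pos πy v = c := ⟨_, rfl⟩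
  rw [ha, hb] at hlt
  have hbm : b ≤ m := hb ▸ pos_le πx v
  have hpum : pu ≤ m := hpu ▸ pos_le πy u
  have hpvm : pv ≤ m := hpv ▸ pos_le πy v
  have hpuv : pu ≠ pv := by
    intro h
    have h2 : u = v := pos_inj (by rw [hpu, hpv, h])
    rw [h2, hb] at ha
    omega
  have hdx : ∀ e : Fin m, a ≤ (e : ℕ) → (e : ℕ) < b → dx e = 0 := by
    intro e h1 h2
    exact coord_zero (by omega) hx e (by omega) (by omega)
  have pa : a < m + 1 := by omega
  have pb : b < m + 1 := by omega
  have pa1 : a + 1 < m + 1 := by omega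
  have hua : πx ⟨a, pa⟩ = u := apply_pos ha pa
  have hvb : πx ⟨b, pb⟩ = v := apply_pos hb pb
  have qa : posq πx πy a = pu := by rw [posq_eq _ _ pa, hua, hpu]
  have qb : posq πx πy b = pv := by rw [posq_eq _ _ pb, hvb, hpv]
  have hq := path_mono πx πy dx hswx a b hlt hbm hdx
  have hea : a < m := by omega
  have hdx0 : dx ⟨a, hea⟩ = 0 := hdx ⟨a, hea⟩ (Nat.le_of_eq rfl) hlt
  have qa1 : posq πx πy (a+1) = pos πy (πx ⟨a+1, pa1⟩) := posq_eq _ _ pa1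
  have E1 : pFst πx ⟨a, hea⟩ = u := apply_pos ha pa
  have E2 : pSnd πx ⟨a, hea⟩ = πx ⟨a+1, pa1⟩ := rfl
  have pcu : pu < m + 1 := by omega
  have pcv : pv < m + 1 := by omega
  rcases Nat.lt_or_ge pu pv with hcase | hcase
  · -- pu < pv : both sequences increasing
    have hdy : ∀ e : Fin m, pu ≤ (e : ℕ) → (e : ℕ) < pv → dy e = 0 := by
      intro e h1 h2
      exact coord_zero (by omega) hy e (by omega) (by omega)
    have hr := path_mono πy πx dy hswy pu pv hcase hpvm hdy
    have rc : posq πy πx pu = a := by rw [posq_eq _ _ pcu, apply_pos hpu pcu, ha]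
    have rd : posq πy πx pv = b := by rw [posq_eq _ _ pcv, apply_pos hpv pcv, hb]
    have hqinc : ∀ i, a ≤ i → i < b → posq πx πy i < posq πx πy (i+1) := by
      rcases hq with h | h
      · exact h
      · exfalso
        have := steps_dec _ a b h a b le_rfl (by omega) le_rfl
        omega
    have hrinc : ∀ i, pu ≤ i → i < pv → posq πy πx i < posq πy πx (i+1) := by
      rcases hr with h | h
      · exact h
      · exfalso
        have := steps_dec _ pu pv h pu pv le_rfl (by omega) le_rfl
        omega
    have hs1 := steps_inc _ a b hqinc a b le_rfl (by omega) le_rfl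
    have hs2 := steps_inc _ pu pv hrinc pu pv le_rfl (by omega) le_rfl
    have hstep1 := hqinc a le_rfl hlt
    have hstep2 := steps_inc _ a b hqinc (a+1) b (by omega) (by omega) le_rfl
    have hq1 : pos πy (πx ⟨a+1, pa1⟩) = pu + 1 := by rw [← qa1]; omega
    have hgm : pu < m := by omega
    have hdyg : dy ⟨pu, hgm⟩ = 0 := hdy ⟨pu, hgm⟩ (Nat.le_of_eq rfl) hcase
    have E3 : pFst πy ⟨pu, hgm⟩ = u := apply_pos hpu pcu
    have E4 : pSnd πy ⟨pu, hgm⟩ = πx ⟨a+1, pa1⟩ := apply_pos hq1 (by omega)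
    have hshared : SharedEdge πx πy ⟨a, hea⟩ ⟨pu, hgm⟩ :=
      Or.inl ⟨E1.trans E3.symm, E2.trans E4.symm⟩
    have := hsh _ _ hshared
    omega
  · -- pv < pu : both sequences decreasing
    have hvu : pv < pu := by omega
    have hdy : ∀ e : Fin m, pv ≤ (e : ℕ) → (e : ℕ) < pu → dy e = 0 := by
      intro e h1 h2
      exact coord_zero (by omega) hy.symm e (by omega) (by omega)
    have hr := path_mono πy πx dy hswy pv pu hvu hpum hdy
    have rc : posq πy πx pv = b := by rw [posq_eq _ _ pcv, apply_pos hpv pcv, hb]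
    have rd : posq πy πx pu = a := by rw [posq_eq _ _ pcu, apply_pos hpu pcu, ha]
    have hqdec : ∀ i, a ≤ i → i < b → posq πx πy (i+1) < posq πx πy i := by
      rcases hq with h | h
      · exfalso
        have := steps_inc _ a b h a b le_rfl (by omega) le_rfl
        omega
      · exact h
    have hrdec : ∀ i, pv ≤ i → i < pu → posq πy πx (i+1) < posq πy πx i := by
      rcases hr with h | h
      · exfalso
        have := steps_inc _ pv pu h pv pu le_rfl (by omega) le_rfl
        omega
      · exact h
    have hs1 := steps_dec _ a b hqdec a b le_rfl (by omega) le_rfl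
    have hs2 := steps_dec _ pv pu hrdec pv pu le_rfl (by omega) le_rfl
    have hstep1 := hqdec a le_rfl hlt
    have hstep2 := steps_dec _ a b hqdec (a+1) b (by omega) (by omega) le_rfl
    have hq1 : pos πy (πx ⟨a+1, pa1⟩) = pu - 1 := by rw [← qa1]; omega
    have hgm : pu - 1 < m := by omega
    have hdyg : dy ⟨pu - 1, hgm⟩ = 0 :=
      hdy ⟨pu - 1, hgm⟩ (show pv ≤ pu - 1 by omega) (show pu - 1 < pu by omega)
    have E3 : pFst πy ⟨pu - 1, hgm⟩ = πx ⟨a+1, pa1⟩ := apply_pos hq1 (by omega)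
    have E4 : pSnd πy ⟨pu - 1, hgm⟩ = u :=
      apply_pos (show pos πy u = pu - 1 + 1 by omega) (by omega)
    have hshared : SharedEdge πx πy ⟨a, hea⟩ ⟨pu - 1, hgm⟩ :=
      Or.inr ⟨E1.trans E4.symm, E2.trans E3.symm⟩
    have := hsh _ _ hshared
    omega

/-- the prefix-sum point assignment built from feasible extents is injective. -/
theorem embedding_injective {m : ℕ} (πx πy : Equiv.Perm (Fin (m+1)))
    (dx dy : Fin m → ℕ) (hfeas : Feasible πx πy dx dy) :
    Function.Injective (fun v : Fin (m+1) => (coord πx dx v, coord πy dy v)) := by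
  intro u v h
  simp only [Prod.mk.injEq] at h
  by_contra hne
  rcases lt_trichotomy (pos πx u) (pos πx v) with hlt | heq | hgt
  · exact main_aux πx πy dx dy hfeas u v h.1 h.2 hlt
  · exact hne (pos_inj heq)
  · exact main_aux πx πy dx dy hfeas v u h.1.symm h.2.symm hgt
end

section
/- The feasible 0/1 assignments of extents to the edges of P_x and P_y satisfying the three extent constraints are in bijection with the vertex covers of the constraint graph C_G, and the total extent of an assignment equals the size of the corresponding vertex cover. In particular, the minimum total extent equals the minimum vertex cover number of C_G. -/
open Finset

variable {m : ℕ}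

/-- The total extent of an assignment. -/
def totalExtent (dx dy : Fin m → ℕ) : ℕ := (∑ e, dx e) + ∑ f, dy f

/-- A vertex cover of a simple graph: a set of vertices meeting every edge. -/
def IsVertexCover {V : Type*} (G : SimpleGraph V) (S : Set V) : Prop :=
  ∀ a b, G.Adj a b → a ∈ S ∨ b ∈ S

/-- The set of constraint-graph vertices picked by a 0/1 extent assignment. -/
def toCover (dx dy : Fin m → ℕ) : Set (Fin m ⊕ Fin m) :=
  {a | Sum.elim (fun e => dx e = 1) (fun f => dy f = 1) a}

/-! For values in `{0, 1}`, `1 ≤ a + b` holds iff `a = 1 ∨ b = 1`. Hence each of the three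
extent constraints says exactly that the corresponding edge of `C_G` meets the set of edges of
extent `1`. A `{0, 1}`-valued function is determined by where it equals `1`, and its sum is the
size of that set. -/

theorem Nat.one_le_add_iff_of_le_one {a b : ℕ} (ha : a ≤ 1) (hb : b ≤ 1) :
    1 ≤ a + b ↔ a = 1 ∨ b = 1 := by
  omega

theorem Nat.ite_eq_one_eq_self_of_le_one {a : ℕ} (ha : a ≤ 1) :
    (if a = 1 then 1 else 0) = a := by
  split <;> omega

theorem ncard_setOf_eq_one_eq_sum {α : Type*} [Fintype α] {d : α → ℕ} (hd : ∀ a, d a ≤ 1) :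
    {a | d a = 1}.ncard = ∑ a, d a := by
  classical
  rw [Set.ncard_eq_toFinset_card', Set.toFinset_ofPred, Finset.card_filter]
  exact Finset.sum_congr rfl fun a _ => Nat.ite_eq_one_eq_self_of_le_one (hd a)

section

variable {πx πy : Equiv.Perm (Fin (m+1))} {dx dy : Fin m → ℕ}

@[simp]
theorem mem_toCover_inl {e : Fin m} : Sum.inl e ∈ toCover dx dy ↔ dx e = 1 :=
  Iff.rfl

@[simp]
theorem mem_toCover_inr {f : Fin m} : Sum.inr f ∈ toCover dx dy ↔ dy f = 1 :=
  Iff.rfl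

theorem toCover_eq_setOf : toCover dx dy = {a | Sum.elim dx dy a = 1} := by
  ext (e | f) <;> rfl

theorem ncard_toCover (hx : ∀ e, dx e ≤ 1) (hy : ∀ f, dy f ≤ 1) :
    (toCover dx dy).ncard = totalExtent dx dy := by
  rw [toCover_eq_setOf, ncard_setOf_eq_one_eq_sum (Sum.forall.2 ⟨hx, hy⟩),
    Fintype.sum_sum_type]
  rfl

theorem isVertexCover_CG_iff {S : Set (Fin m ⊕ Fin m)} :
    IsVertexCover (CG πx πy) S ↔
      (∀ e f, SwitchPairX πx πy e f → Sum.inl e ∈ S ∨ Sum.inl f ∈ S) ∧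
      (∀ e f, SwitchPairY πx πy e f → Sum.inr e ∈ S ∨ Sum.inr f ∈ S) ∧
      (∀ e f, SharedEdge πx πy e f → Sum.inl e ∈ S ∨ Sum.inr f ∈ S) := by
  constructor
  · intro hS
    exact ⟨fun e f h => hS _ _ (Or.inl h), fun e f h => hS _ _ (Or.inl h),
      fun e f h => hS _ _ h⟩
  · rintro ⟨hX, hY, hXY⟩ (e | e) (f | f) hef
    · rcases hef with h | h
      exacts [hX e f h, (hX f e h).symm]
    · exact hXY e f hef
    · exact (hXY f e hef).symm
    · rcases hef with h | h
      exacts [hY e f h, (hY f e h).symm]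

theorem feasible_iff_isVertexCover_toCover (hx : ∀ e, dx e ≤ 1) (hy : ∀ f, dy f ≤ 1) :
    Feasible πx πy dx dy ↔ IsVertexCover (CG πx πy) (toCover dx dy) := by
  simp [Feasible, isVertexCover_CG_iff, Nat.one_le_add_iff_of_le_one, hx, hy]

end

open Classical in
noncomputable def ofCover (S : Set (Fin m ⊕ Fin m)) : (Fin m → ℕ) × (Fin m → ℕ) :=
  (fun e => if Sum.inl e ∈ S then 1 else 0, fun f => if Sum.inr f ∈ S then 1 else 0)

theorem ofCover_le_one (S : Set (Fin m ⊕ Fin m)) :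
    (∀ e, (ofCover S).1 e ≤ 1) ∧ ∀ f, (ofCover S).2 f ≤ 1 := by
  constructor <;> intro e <;> dsimp only [ofCover] <;> split <;> omega

theorem toCover_ofCover (S : Set (Fin m ⊕ Fin m)) :
    toCover (ofCover S).1 (ofCover S).2 = S := by
  ext (e | f) <;> simp [ofCover]

theorem ofCover_toCover {dx dy : Fin m → ℕ} (hx : ∀ e, dx e ≤ 1) (hy : ∀ f, dy f ≤ 1) :
    ofCover (toCover dx dy) = (dx, dy) := by
  ext e
  · simp only [ofCover, mem_toCover_inl]
    convert Nat.ite_eq_one_eq_self_of_le_one (hx e)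
  · simp only [ofCover, mem_toCover_inr]
    convert Nat.ite_eq_one_eq_self_of_le_one (hy e)

theorem bijOn_toCover (πx πy : Equiv.Perm (Fin (m+1))) :
    Set.BijOn (fun p : (Fin m → ℕ) × (Fin m → ℕ) => toCover p.1 p.2)
      {p | (∀ e, p.1 e ≤ 1) ∧ (∀ f, p.2 f ≤ 1) ∧ Feasible πx πy p.1 p.2}
      {S | IsVertexCover (CG πx πy) S} := by
  refine Set.InvOn.bijOn (f' := ofCover) ⟨?_, fun S _ => toCover_ofCover S⟩ ?_ ?_
  · rintro ⟨dx, dy⟩ ⟨hx, hy, -⟩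
    exact ofCover_toCover hx hy
  · rintro ⟨dx, dy⟩ ⟨hx, hy, hf⟩
    exact (feasible_iff_isVertexCover_toCover hx hy).1 hf
  · intro S hS
    obtain ⟨hx, hy⟩ := ofCover_le_one S
    refine ⟨hx, hy, (feasible_iff_isVertexCover_toCover hx hy).2 ?_⟩
    rwa [toCover_ofCover]

theorem setOf_totalExtent_eq_setOf_ncard (πx πy : Equiv.Perm (Fin (m+1))) :
    {t | ∃ dx dy : Fin m → ℕ, (∀ e, dx e ≤ 1) ∧ (∀ f, dy f ≤ 1) ∧
        Feasible πx πy dx dy ∧ totalExtent dx dy = t} =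
      {k | ∃ S : Set (Fin m ⊕ Fin m), IsVertexCover (CG πx πy) S ∧ S.ncard = k} := by
  ext k
  constructor
  · rintro ⟨dx, dy, hx, hy, hf, rfl⟩
    exact ⟨_, (feasible_iff_isVertexCover_toCover hx hy).1 hf, ncard_toCover hx hy⟩
  · rintro ⟨S, hS, rfl⟩
    obtain ⟨⟨dx, dy⟩, ⟨hx, hy, hf⟩, rfl⟩ := (bijOn_toCover πx πy).surjOn hS
    exact ⟨dx, dy, hx, hy, hf, (ncard_toCover hx hy).symm⟩

/-- feasible 0/1 extent assignments are in bijection with vertex covers of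
the constraint graph `C_G`, the total extent equals the size of the corresponding
cover, and the minimum total extent equals the minimum vertex cover number. -/
theorem feasible01_iff_vertexCover {m : ℕ} (πx πy : Equiv.Perm (Fin (m+1))) :
    (∀ dx dy : Fin m → ℕ, (∀ e, dx e ≤ 1) → (∀ f, dy f ≤ 1) →
      ((Feasible πx πy dx dy ↔ IsVertexCover (CG πx πy) (toCover dx dy)) ∧
        (toCover dx dy).ncard = totalExtent dx dy)) ∧
    Set.BijOn (fun p : (Fin m → ℕ) × (Fin m → ℕ) => toCover p.1 p.2)
      {p | (∀ e, p.1 e ≤ 1) ∧ (∀ f, p.2 f ≤ 1) ∧ Feasible πx πy p.1 p.2}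
      {S | IsVertexCover (CG πx πy) S} ∧
    sInf {t | ∃ dx dy : Fin m → ℕ, (∀ e, dx e ≤ 1) ∧ (∀ f, dy f ≤ 1) ∧
        Feasible πx πy dx dy ∧ totalExtent dx dy = t} =
      sInf {k | ∃ S : Set (Fin m ⊕ Fin m), IsVertexCover (CG πx πy) S ∧ S.ncard = k} :=
  ⟨fun _ _ hx hy => ⟨feasible_iff_isVertexCover_toCover hx hy, ncard_toCover hx hy⟩,
    bijOn_toCover πx πy, congrArg sInf (setOf_totalExtent_eq_setOf_ncard πx πy)⟩
end
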